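/- arXiv:2511.01443 — 2 statements merged into one kernel-verified Lean document; each statement's English description precedes it below -/
import Mathlib

section
/- Rayleigh monotonicity: if the weight of a single edge of a connected graph is increased (or a new edge added), then the effective resistance between every pair of vertices does not increase. -/
open Matrix

/-- The weighted graph Laplacian `L = D - A`. -/
def lap {n : ℕ} (A : Matrix (Fin n) (Fin n) ℝ) : Matrix (Fin n) (Fin n) ℝ :=
  Matrix.diagonal (fun i => ∑ j, A i j) - A

/-- The Moore–Penrose conditions. -/
def IsMoorePenrose {n : ℕ} (L H : Matrix (Fin n) (Fin n) ℝ) : Prop :=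
  L * H * L = L ∧ H * L * H = H ∧ (L * H)ᵀ = L * H ∧ (H * L)ᵀ = H * L

/-- Effective resistance `w_ij = (e_i - e_j)ᵀ L† (e_i - e_j)`. -/
def effRes {n : ℕ} (Ldag : Matrix (Fin n) (Fin n) ℝ) (i j : Fin n) : ℝ :=
  (Pi.single i 1 - Pi.single j 1) ⬝ᵥ (Ldag *ᵥ (Pi.single i 1 - Pi.single j 1))

open Finset

lemma lap_mulVec {n : ℕ} (A : Matrix (Fin n) (Fin n) ℝ) (y : Fin n → ℝ) (i : Fin n) :
    (lap A *ᵥ y) i = ∑ j, A i j * (y i - y j) := by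
  simp only [lap, sub_mulVec, Pi.sub_apply, Matrix.mulVec_diagonal, mul_sub,
    Finset.sum_sub_distrib, Finset.sum_mul]
  rfl

lemma lap_quadform {n : ℕ} (A : Matrix (Fin n) (Fin n) ℝ) (hsymm : A.IsSymm) (y : Fin n → ℝ) :
    2 * (y ⬝ᵥ (lap A *ᵥ y)) = ∑ i, ∑ j, A i j * (y i - y j) ^ 2 := by
  have hs : ∀ i j, A j i = A i j := fun i j => hsymm.apply i j
  have h1 : y ⬝ᵥ (lap A *ᵥ y) = ∑ i, ∑ j, y i * (A i j * (y i - y j)) := by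
    simp only [dotProduct, lap_mulVec, Finset.mul_sum]
  have h2 : y ⬝ᵥ (lap A *ᵥ y) = ∑ i, ∑ j, y j * (A i j * (y j - y i)) := by
    rw [h1, Finset.sum_comm]
    exact Finset.sum_congr rfl fun i _ => Finset.sum_congr rfl fun j _ => by rw [hs i j]
  calc 2 * (y ⬝ᵥ (lap A *ᵥ y))
      = (∑ i, ∑ j, y i * (A i j * (y i - y j))) + ∑ i, ∑ j, y j * (A i j * (y j - y i)) := by
        rw [← h1, ← h2]; ring
    _ = ∑ i, ∑ j, A i j * (y i - y j) ^ 2 := by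
        rw [← Finset.sum_add_distrib]
        refine Finset.sum_congr rfl fun i _ => ?_
        rw [← Finset.sum_add_distrib]
        exact Finset.sum_congr rfl fun j _ => by ring

lemma lap_psd {n : ℕ} (A : Matrix (Fin n) (Fin n) ℝ) (hsymm : A.IsSymm)
    (hnonneg : ∀ i j, 0 ≤ A i j) (y : Fin n → ℝ) : 0 ≤ y ⬝ᵥ (lap A *ᵥ y) := by
  have h := lap_quadform A hsymm y
  have : 0 ≤ ∑ i, ∑ j, A i j * (y i - y j) ^ 2 :=
    Finset.sum_nonneg fun i _ => Finset.sum_nonneg fun j _ =>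
      mul_nonneg (hnonneg i j) (sq_nonneg _)
  linarith

lemma lap_mono {n : ℕ} (A A' : Matrix (Fin n) (Fin n) ℝ) (hsymm : A.IsSymm)
    (hsymm' : A'.IsSymm) (hle : ∀ i j, A i j ≤ A' i j) (y : Fin n → ℝ) :
    y ⬝ᵥ (lap A *ᵥ y) ≤ y ⬝ᵥ (lap A' *ᵥ y) := by
  have h := lap_quadform A hsymm y
  have h' := lap_quadform A' hsymm' y
  have : ∑ i, ∑ j, A i j * (y i - y j) ^ 2 ≤ ∑ i, ∑ j, A' i j * (y i - y j) ^ 2 :=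
    Finset.sum_le_sum fun i _ => Finset.sum_le_sum fun j _ =>
      mul_le_mul_of_nonneg_right (hle i j) (sq_nonneg _)
  linarith

lemma lap_transpose {n : ℕ} (A : Matrix (Fin n) (Fin n) ℝ) (hsymm : A.IsSymm) :
    (lap A)ᵀ = lap A := by
  unfold lap
  rw [Matrix.transpose_sub, Matrix.diagonal_transpose, hsymm]

lemma lap_swap {n : ℕ} (A : Matrix (Fin n) (Fin n) ℝ) (hsymm : A.IsSymm)
    (v w : Fin n → ℝ) : v ⬝ᵥ (lap A *ᵥ w) = (lap A *ᵥ v) ⬝ᵥ w := by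
  rw [Matrix.dotProduct_mulVec, ← Matrix.mulVec_transpose, lap_transpose A hsymm]

lemma ones_dot_lap {n : ℕ} (A : Matrix (Fin n) (Fin n) ℝ) (hsymm : A.IsSymm)
    (v : Fin n → ℝ) : (fun _ => (1:ℝ)) ⬝ᵥ (lap A *ᵥ v) = 0 := by
  rw [lap_swap A hsymm]
  have : lap A *ᵥ (fun _ => (1:ℝ)) = 0 := by
    funext i; simp [lap_mulVec]
  rw [this]
  simp

lemma lap_ker_const {n : ℕ} (A : Matrix (Fin n) (Fin n) ℝ) (hsymm : A.IsSymm)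
    (hnonneg : ∀ i j, 0 ≤ A i j)
    (hconn : ∀ i j : Fin n, Relation.ReflTransGen (fun a b => 0 < A a b) i j)
    (z : Fin n → ℝ) (hz : lap A *ᵥ z = 0) : ∀ i j, z i = z j := by
  have hq : ∑ i, ∑ j, A i j * (z i - z j) ^ 2 = 0 := by
    have := lap_quadform A hsymm z
    rw [hz] at this
    simpa using this.symm
  have hterm : ∀ a b : Fin n, 0 < A a b → z a = z b := by
    intro a b hab
    have h1 : ∀ i ∈ Finset.univ, (0:ℝ) ≤ ∑ j, A i j * (z i - z j) ^ 2 :=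
      fun i _ => Finset.sum_nonneg fun j _ => mul_nonneg (hnonneg i j) (sq_nonneg _)
    have h2 := (Finset.sum_eq_zero_iff_of_nonneg h1).mp hq a (Finset.mem_univ a)
    have h3 : ∀ j ∈ Finset.univ, (0:ℝ) ≤ A a j * (z a - z j) ^ 2 :=
      fun j _ => mul_nonneg (hnonneg a j) (sq_nonneg _)
    have h4 := (Finset.sum_eq_zero_iff_of_nonneg h3).mp h2 b (Finset.mem_univ b)
    have h5 : (z a - z b) ^ 2 = 0 := by
      rcases mul_eq_zero.mp h4 with h | h
      · exact absurd h (ne_of_gt hab)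
      · exact h
    have := pow_eq_zero_iff (n := 2) (by norm_num) |>.mp h5
    linarith
  intro i j
  induction hconn i j with
  | refl => rfl
  | tail _ hab ih => exact ih.trans (hterm _ _ hab)

lemma lap_proj {n : ℕ} (A : Matrix (Fin n) (Fin n) ℝ) (H : Matrix (Fin n) (Fin n) ℝ)
    (hsymm : A.IsSymm) (hnonneg : ∀ i j, 0 ≤ A i j)
    (hconn : ∀ i j : Fin n, Relation.ReflTransGen (fun a b => 0 < A a b) i j)
    (hLHL : lap A * H * lap A = lap A) (hPt : (lap A * H)ᵀ = lap A * H)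
    (x : Fin n → ℝ) (hx : ∑ i, x i = 0) (i0 : Fin n) :
    lap A *ᵥ (H *ᵥ x) = x := by
  have hLP : lap A * (lap A * H) = lap A := by
    have h := congrArg Matrix.transpose hLHL
    rw [Matrix.transpose_mul, hPt, lap_transpose A hsymm] at h
    exact h
  set z : Fin n → ℝ := x - lap A *ᵥ (H *ᵥ x) with hzdef
  have hLz : lap A *ᵥ z = 0 := by
    have h1 : lap A *ᵥ (lap A *ᵥ (H *ᵥ x)) = lap A *ᵥ x := by
      rw [Matrix.mulVec_mulVec, Matrix.mulVec_mulVec, Matrix.mul_assoc, hLP]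
    rw [hzdef, Matrix.mulVec_sub, h1, sub_self]
  have hconst := lap_ker_const A hsymm hnonneg hconn z hLz
  have hsum : ∑ i, z i = 0 := by
    have h1 : (fun _ => (1:ℝ)) ⬝ᵥ (lap A *ᵥ (H *ᵥ x)) = 0 := ones_dot_lap A hsymm _
    have h2 : (fun _ => (1:ℝ)) ⬝ᵥ (lap A *ᵥ (H *ᵥ x)) = ∑ i, (lap A *ᵥ (H *ᵥ x)) i := by
      simp [dotProduct]
    rw [hzdef]
    simp only [Pi.sub_apply, Finset.sum_sub_distrib, hx, ← h2, h1, sub_zero]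
  have hz0 : z i0 = 0 := by
    have hcardsum : ∑ i : Fin n, z i = (n : ℝ) * z i0 := by
      rw [Finset.sum_congr rfl fun i _ => hconst i i0]
      simp [Finset.sum_const, nsmul_eq_mul]
    rw [hcardsum] at hsum
    have hn : (0:ℝ) < (n : ℝ) := by exact_mod_cast i0.pos
    exact (mul_eq_zero.mp hsum).resolve_left (ne_of_gt hn)
  have hzz : z = 0 := funext fun i => (hconst i i0).trans hz0
  rw [hzdef] at hzz
  exact (sub_eq_zero.mp hzz).symm


/-- Rayleigh monotonicity: increasing the weight of a single edge `(k,l)`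
(or adding a new edge there) does not increase any effective resistance. -/
theorem rayleigh_monotonicity {n : ℕ} (A A' : Matrix (Fin n) (Fin n) ℝ)
    (hsymm : A.IsSymm) (hnonneg : ∀ i j, 0 ≤ A i j) (hdiag : ∀ i, A i i = 0)
    (hsymm' : A'.IsSymm) (hdiag' : ∀ i, A' i i = 0)
    (hconn : ∀ i j : Fin n, Relation.ReflTransGen (fun a b => 0 < A a b) i j)
    (k l : Fin n) (hkl : k ≠ l)
    (hinc : A k l ≤ A' k l)
    (hother : ∀ a b, ¬((a = k ∧ b = l) ∨ (a = l ∧ b = k)) → A' a b = A a b)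
    (Ldag Ldag' : Matrix (Fin n) (Fin n) ℝ)
    (hMP : IsMoorePenrose (lap A) Ldag) (hMP' : IsMoorePenrose (lap A') Ldag') :
    ∀ i j, effRes Ldag' i j ≤ effRes Ldag i j := by
  obtain ⟨hM1, hM2, hM3, hM4⟩ := hMP
  obtain ⟨hM1', hM2', hM3', hM4'⟩ := hMP'
  have hle : ∀ a b, A a b ≤ A' a b := by
    intro a b
    by_cases h : (a = k ∧ b = l) ∨ (a = l ∧ b = k)
    · rcases h with ⟨rfl, rfl⟩ | ⟨rfl, rfl⟩
      · exact hinc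
      · calc A a b = A b a := hsymm.apply b a
          _ ≤ A' b a := hinc
          _ = A' a b := (hsymm'.apply b a).symm
    · rw [hother a b h]
  have hnonneg' : ∀ a b, 0 ≤ A' a b := fun a b => (hnonneg a b).trans (hle a b)
  have hconn' : ∀ i j : Fin n, Relation.ReflTransGen (fun a b => 0 < A' a b) i j :=
    fun i j => Relation.ReflTransGen.mono (fun a b hab => lt_of_lt_of_le hab (hle a b)) i j (hconn i j)
  intro i j
  simp only [effRes]
  set x : Fin n → ℝ := Pi.single i 1 - Pi.single j 1 with hxdef
  have hx : ∑ m, x m = 0 := by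
    simp [hxdef, Pi.single_apply, Finset.sum_sub_distrib]
  set y : Fin n → ℝ := Ldag' *ᵥ x with hydef
  set u : Fin n → ℝ := Ldag *ᵥ x with hudef
  have hLy : lap A' *ᵥ y = x := lap_proj A' Ldag' hsymm' hnonneg' hconn' hM1' hM3' x hx i
  have hLu : lap A *ᵥ u = x := lap_proj A Ldag hsymm hnonneg hconn hM1 hM3 x hx i
  have key : 0 ≤ (u - y) ⬝ᵥ (lap A *ᵥ (u - y)) := lap_psd A hsymm hnonneg _
  have expand : (u - y) ⬝ᵥ (lap A *ᵥ (u - y))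
      = x ⬝ᵥ u - 2 * (x ⬝ᵥ y) + y ⬝ᵥ (lap A *ᵥ y) := by
    rw [Matrix.mulVec_sub, dotProduct_sub, sub_dotProduct,
      sub_dotProduct, hLu]
    have h1 : u ⬝ᵥ (lap A *ᵥ y) = x ⬝ᵥ y := by rw [lap_swap A hsymm, hLu]
    have h2 : u ⬝ᵥ x = x ⬝ᵥ u := dotProduct_comm _ _
    have h3 : y ⬝ᵥ x = x ⬝ᵥ y := dotProduct_comm _ _
    rw [h1, h2, h3]; ring
  have hb : x ⬝ᵥ y = y ⬝ᵥ (lap A' *ᵥ y) := by rw [hLy, dotProduct_comm]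
  have hmono := lap_mono A A' hsymm hsymm' hle y
  rw [expand] at key
  linarith
end

section
/- The total effective graph resistance R(G) = Σ_{i<j} w_ij strictly decreases when a new edge is added between two distinct non-adjacent vertices of a connected graph, or when the weight of an existing edge is strictly increased. -/
open Matrix

namespace EGR
variable {n : ℕ}

lemma mul_vecMulVec (B : Matrix (Fin n) (Fin n) ℝ) (u w : Fin n → ℝ) :
    B * vecMulVec u w = vecMulVec (B *ᵥ u) w := by
  ext i j
  simp [Matrix.mul_apply, vecMulVec_apply, Matrix.mulVec, dotProduct,
    Finset.sum_mul, mul_assoc]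

lemma vecMulVec_mul (B : Matrix (Fin n) (Fin n) ℝ) (u w : Fin n → ℝ) :
    vecMulVec u w * B = vecMulVec u (w ᵥ* B) := by
  ext i j
  simp [Matrix.mul_apply, vecMulVec_apply, Matrix.vecMul, dotProduct,
    Finset.mul_sum, mul_assoc]

lemma vecMulVec_mul_vecMulVec (u w u' w' : Fin n → ℝ) :
    vecMulVec u w * vecMulVec u' w' = (w ⬝ᵥ u') • vecMulVec u w' := by
  ext i j
  simp only [Matrix.mul_apply, vecMulVec_apply, dotProduct, Matrix.smul_apply,
    Finset.sum_mul, smul_eq_mul, Finset.mul_sum]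
  exact Finset.sum_congr rfl fun m _ => by ring

lemma vecMulVec_mulVec (u w x : Fin n → ℝ) :
    vecMulVec u w *ᵥ x = (w ⬝ᵥ x) • u := by
  funext i
  simp only [vecMulVec_apply, Matrix.mulVec, dotProduct, Pi.smul_apply,
    smul_eq_mul, Finset.mul_sum, Finset.sum_mul]
  exact Finset.sum_congr rfl fun m _ => by ring

lemma transpose_vecMulVec (u w : Fin n → ℝ) :
    (vecMulVec u w)ᵀ = vecMulVec w u := by
  ext i j; simp [vecMulVec_apply, mul_comm]

lemma lap_transpose (A : Matrix (Fin n) (Fin n) ℝ) (h : A.IsSymm) : (lap A)ᵀ = lap A := by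
  unfold lap
  rw [Matrix.transpose_sub, Matrix.diagonal_transpose, h.eq]

lemma lap_mulVec_one (A : Matrix (Fin n) (Fin n) ℝ) :
    lap A *ᵥ (fun _ => (1:ℝ)) = 0 := by
  funext i
  simp [lap, Matrix.sub_mulVec, Matrix.mulVec, dotProduct, Matrix.diagonal]

lemma lap_quad (A : Matrix (Fin n) (Fin n) ℝ) (h : A.IsSymm) (x : Fin n → ℝ) :
    x ⬝ᵥ (lap A *ᵥ x) = (1/2) * ∑ i, ∑ j, A i j * (x i - x j)^2 := by
  set T := ∑ i, ∑ j, (A i j * (x i)^2 - A i j * (x i * x j)) with hT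
  set T' := ∑ i, ∑ j, (A i j * (x j)^2 - A i j * (x i * x j)) with hT'
  have h1 : ∀ i, (lap A *ᵥ x) i = (∑ j, A i j) * x i - ∑ j, A i j * x j := by
    intro i
    simp only [lap, Matrix.sub_mulVec, Matrix.mulVec, dotProduct, Pi.sub_apply,
      Matrix.sub_apply, sub_mul, Finset.sum_sub_distrib, Matrix.diagonal_apply, ite_mul,
      zero_mul, Finset.sum_ite_eq, Finset.mem_univ, if_true]
  have lhs : x ⬝ᵥ (lap A *ᵥ x) = T := by
    rw [hT]
    simp only [dotProduct, h1]
    refine Finset.sum_congr rfl fun i _ => ?_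
    have t1 : x i * ((∑ j, A i j) * x i) = ∑ j, A i j * (x i)^2 := by
      rw [Finset.sum_mul, Finset.mul_sum]; exact Finset.sum_congr rfl fun j _ => by ring
    have t2 : x i * (∑ j, A i j * x j) = ∑ j, A i j * (x i * x j) := by
      rw [Finset.mul_sum]; exact Finset.sum_congr rfl fun j _ => by ring
    rw [mul_sub, t1, t2, ← Finset.sum_sub_distrib]
  have e2 : T' = T := by
    rw [hT', Finset.sum_comm, hT]
    refine Finset.sum_congr rfl fun i _ => Finset.sum_congr rfl fun j _ => ?_
    rw [h.apply i j]
    ring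
  have e3 : ∑ i, ∑ j, A i j * (x i - x j)^2 = T + T' := by
    rw [hT, hT', ← Finset.sum_add_distrib]
    refine Finset.sum_congr rfl fun i _ => ?_
    rw [← Finset.sum_add_distrib]
    exact Finset.sum_congr rfl fun j _ => by ring
  rw [lhs, e3, e2]
  ring

lemma lap_quad_nonneg (A : Matrix (Fin n) (Fin n) ℝ) (h : A.IsSymm)
    (hnn : ∀ i j, 0 ≤ A i j) (x : Fin n → ℝ) : 0 ≤ x ⬝ᵥ (lap A *ᵥ x) := by
  rw [lap_quad A h x]
  have : 0 ≤ ∑ i, ∑ j, A i j * (x i - x j)^2 :=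
    Finset.sum_nonneg fun i _ => Finset.sum_nonneg fun j _ =>
      mul_nonneg (hnn i j) (sq_nonneg _)
  linarith

lemma lap_ker (A : Matrix (Fin n) (Fin n) ℝ) (h : A.IsSymm) (hnn : ∀ i j, 0 ≤ A i j)
    (hconn : ∀ i j : Fin n, Relation.ReflTransGen (fun a b => 0 < A a b) i j)
    (x : Fin n → ℝ) (hx : lap A *ᵥ x = 0) : ∀ i j, x i = x j := by
  have hq : (1/2) * ∑ i, ∑ j, A i j * (x i - x j)^2 = 0 := by
    rw [← lap_quad A h x, hx, dotProduct_zero]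
  have hz : ∀ i ∈ Finset.univ, ∀ j ∈ (Finset.univ : Finset (Fin n)),
      A i j * (x i - x j)^2 = 0 := by
    have hsum : ∑ i, ∑ j, A i j * (x i - x j)^2 = 0 := by linarith
    have hnn2 : ∀ i ∈ (Finset.univ : Finset (Fin n)), 0 ≤ ∑ j, A i j * (x i - x j)^2 :=
      fun i _ => Finset.sum_nonneg fun j _ => mul_nonneg (hnn i j) (sq_nonneg _)
    intro i hi j hj
    have hi0 : ∑ j, A i j * (x i - x j)^2 = 0 :=
      (Finset.sum_eq_zero_iff_of_nonneg hnn2).mp hsum i hi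
    exact (Finset.sum_eq_zero_iff_of_nonneg
      (fun j _ => mul_nonneg (hnn i j) (sq_nonneg _))).mp hi0 j hj
  have hstep : ∀ a b : Fin n, 0 < A a b → x a = x b := by
    intro a b hab
    have := hz a (Finset.mem_univ a) b (Finset.mem_univ b)
    have h2 : (x a - x b)^2 = 0 := by
      rcases mul_eq_zero.mp this with h' | h'
      · exact absurd h' (ne_of_gt hab)
      · exact h'
    have := pow_eq_zero_iff (n := 2) (by norm_num) |>.mp h2
    linarith
  intro i j
  induction hconn i j with
  | refl => rfl
  | tail _ hbc ih => exact ih.trans (hstep _ _ hbc)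

lemma mp_unique (L H1 H2 : Matrix (Fin n) (Fin n) ℝ)
    (h1 : IsMoorePenrose L H1) (h2 : IsMoorePenrose L H2) : H1 = H2 := by
  obtain ⟨a1, b1, c1, d1⟩ := h1
  obtain ⟨a2, b2, c2, d2⟩ := h2
  have e1 : L * H1 = L * H2 := by
    calc L * H1 = H1ᵀ * Lᵀ := by rw [← Matrix.transpose_mul, c1]
      _ = H1ᵀ * (L * H2 * L)ᵀ := by conv_lhs => rw [← a2]
      _ = (L * H1)ᵀ * (L * H2)ᵀ := by simp [Matrix.transpose_mul, Matrix.mul_assoc]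
      _ = (L * H1) * (L * H2) := by rw [c1, c2]
      _ = (L * H1 * L) * H2 := by simp only [Matrix.mul_assoc]
      _ = L * H2 := by rw [a1]
  have e2 : H1 * L = H2 * L := by
    calc H1 * L = Lᵀ * H1ᵀ := by rw [← Matrix.transpose_mul, d1]
      _ = (L * H2 * L)ᵀ * H1ᵀ := by conv_lhs => rw [← a2]
      _ = (H2 * L)ᵀ * (H1 * L)ᵀ := by simp [Matrix.transpose_mul, Matrix.mul_assoc]
      _ = (H2 * L) * (H1 * L) := by rw [d2, d1]
      _ = H2 * (L * H1 * L) := by simp only [Matrix.mul_assoc]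
      _ = H2 * L := by rw [a1]
  calc H1 = H1 * L * H1 := b1.symm
    _ = H1 * (L * H2) := by rw [Matrix.mul_assoc, e1]
    _ = (H2 * L) * H2 := by rw [← Matrix.mul_assoc, e2]
    _ = H2 := b2

lemma mp_transpose (L H : Matrix (Fin n) (Fin n) ℝ) (hL : Lᵀ = L)
    (h : IsMoorePenrose L H) : IsMoorePenrose L Hᵀ := by
  obtain ⟨a, b, c, d⟩ := h
  have h1 : L * Hᵀ = H * L := by
    conv_lhs => rw [← hL]
    rw [← Matrix.transpose_mul]; exact d
  have h2 : Hᵀ * L = L * H := by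
    conv_lhs => rw [← hL]
    rw [← Matrix.transpose_mul]; exact c
  refine ⟨?_, ?_, ?_, ?_⟩
  · have := congrArg Matrix.transpose a
    simpa [Matrix.transpose_mul, hL, Matrix.mul_assoc] using this
  · have := congrArg Matrix.transpose b
    simpa [Matrix.transpose_mul, hL, Matrix.mul_assoc] using this
  · rw [h1]; exact d
  · rw [h2]; exact c

lemma mp_symm (L H : Matrix (Fin n) (Fin n) ℝ) (hL : Lᵀ = L)
    (h : IsMoorePenrose L H) : Hᵀ = H :=
  mp_unique L Hᵀ H (mp_transpose L H hL h) h

noncomputable def o (n : ℕ) : Fin n → ℝ := fun _ => 1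
noncomputable def P (n : ℕ) : Matrix (Fin n) (Fin n) ℝ :=
  1 - ((n:ℝ)⁻¹) • vecMulVec (o n) (o n)

lemma P_mulVec (x : Fin n → ℝ) :
    P n *ᵥ x = x - ((n:ℝ)⁻¹ * ((o n) ⬝ᵥ x)) • (o n) := by
  rw [P, Matrix.sub_mulVec, Matrix.one_mulVec, Matrix.smul_mulVec, vecMulVec_mulVec,
    smul_smul]

lemma dot_o (x : Fin n → ℝ) : (o n) ⬝ᵥ x = ∑ i, x i := by
  simp [o, dotProduct]

lemma P_mulVec_of_dot_zero (x : Fin n → ℝ) (hx : (o n) ⬝ᵥ x = 0) : P n *ᵥ x = x := by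
  rw [P_mulVec, hx]; simp

lemma LH_eq_P (hn : 0 < n) (L H : Matrix (Fin n) (Fin n) ℝ)
    (hLsym : Lᵀ = L) (hHsym : Hᵀ = H)
    (hL1 : L *ᵥ (o n) = 0)
    (hker : ∀ x, L *ᵥ x = 0 → ∀ i j, x i = x j)
    (hMP : IsMoorePenrose L H) : L * H = P n := by
  obtain ⟨a, b, c, d⟩ := hMP
  have comm : L * H = H * L := by
    rw [← c, Matrix.transpose_mul, hHsym, hLsym]
  have lhO : (L * H) *ᵥ (o n) = 0 := by
    rw [comm, ← Matrix.mulVec_mulVec, hL1, Matrix.mulVec_zero]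
  have key : ∀ x, (o n) ⬝ᵥ x = 0 → (L * H) *ᵥ x = x := by
    intro x hx
    set z : Fin n → ℝ := x - (L * H) *ᵥ x with hz
    have hLz : L *ᵥ z = 0 := by
      rw [hz, Matrix.mulVec_sub, comm, Matrix.mulVec_mulVec, ← Matrix.mul_assoc, a, sub_self]
    have hconst := hker z hLz
    have hdots : (o n) ⬝ᵥ ((L * H) *ᵥ x) = 0 := by
      rw [Matrix.dotProduct_mulVec]
      have : (o n) ᵥ* (L * H) = 0 := by
        have : (L * H)ᵀ *ᵥ (o n) = 0 := by rw [c, lhO]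
        rw [← Matrix.mulVec_transpose]
        exact this
      rw [this, zero_dotProduct]
    have hzdot : (o n) ⬝ᵥ z = 0 := by
      rw [hz, dotProduct_sub, hx, hdots, sub_zero]
    have hz0 : z = 0 := by
      funext i
      have hsum : ∑ j, z j = 0 := by rw [← dot_o]; exact hzdot
      have : ∑ j : Fin n, z j = (n : ℝ) * z i := by
        rw [Finset.sum_congr rfl fun j _ => hconst j i]
        simp [Finset.card_univ, mul_comm]
      have hn' : (n:ℝ) ≠ 0 := Nat.cast_ne_zero.mpr hn.ne'
      have h0 : (n:ℝ) * z i = 0 := by rw [← this]; exact hsum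
      exact (mul_eq_zero.mp h0).resolve_left hn'
    have hsub : x - (L * H) *ᵥ x = 0 := hz0
    exact (sub_eq_zero.mp hsub).symm
  have hn' : (n:ℝ) ≠ 0 := Nat.cast_ne_zero.mpr hn.ne'
  ext i j
  have hx : (o n) ⬝ᵥ (Pi.single j 1 - ((n:ℝ)⁻¹) • o n) = 0 := by
    have h1 : (o n) ⬝ᵥ (Pi.single j 1 : Fin n → ℝ) = 1 := by
      rw [dot_o]
      simp [Pi.single_apply]
    have h2 : (o n) ⬝ᵥ (((n:ℝ)⁻¹) • o n) = 1 := by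
      rw [dot_o]
      simp [o, Finset.card_univ]
      field_simp
    rw [dotProduct_sub, h1, h2, sub_self]
  have e := key _ hx
  rw [Matrix.mulVec_sub, Matrix.mulVec_smul, lhO, smul_zero, sub_zero] at e
  have h3 : (L * H) i j = (Pi.single j 1 : Fin n → ℝ) i - (n:ℝ)⁻¹ * 1 := by
    simpa [Matrix.mulVec_single, o] using congrFun e i
  rw [h3]
  simp [P, Matrix.sub_apply, Matrix.smul_apply, vecMulVec_apply, o, Matrix.one_apply,
    Pi.single_apply]

set_option maxHeartbeats 1000000 in
lemma lap_decomp (A A' : Matrix (Fin n) (Fin n) ℝ)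
    (hsymm : A.IsSymm) (hsymm' : A'.IsSymm) (k l : Fin n) (hkl : k ≠ l)
    (hother : ∀ a b, ¬((a = k ∧ b = l) ∨ (a = l ∧ b = k)) → A' a b = A a b) :
    lap A' = lap A + (A' k l - A k l) •
      vecMulVec ((Pi.single k 1 : Fin n → ℝ) - Pi.single l 1)
                ((Pi.single k 1 : Fin n → ℝ) - Pi.single l 1) := by
  have hA : ∀ a b, A' a b = A a b +
      ((if a = k ∧ b = l then A' k l - A k l else 0) +
       (if a = l ∧ b = k then A' k l - A k l else 0)) := by
    intro a b
    by_cases h1 : a = k ∧ b = l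
    · have h2 : ¬(a = l ∧ b = k) := fun h => hkl ((h1.1.symm).trans h.1)
      rw [h1.1, h1.2, if_pos ⟨rfl, rfl⟩, if_neg (by rw [h1.1, h1.2] at h2; exact h2)]
      ring
    · by_cases h2 : a = l ∧ b = k
      · rw [h2.1, h2.2, if_neg (by rw [h2.1, h2.2] at h1; exact h1), if_pos ⟨rfl, rfl⟩]
        rw [hsymm'.apply, hsymm.apply]
        ring
      · rw [hother a b (by tauto), if_neg h1, if_neg h2]
        ring
  have s1 : ∀ a : Fin n, ∑ b, (if a = k ∧ b = l then A' k l - A k l else 0)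
      = (if a = k then A' k l - A k l else 0) := by
    intro a
    by_cases h : a = k <;> simp [h]
  have s2 : ∀ a : Fin n, ∑ b, (if a = l ∧ b = k then A' k l - A k l else 0)
      = (if a = l then A' k l - A k l else 0) := by
    intro a
    by_cases h : a = l <;> simp [h]
  have hrow : ∀ a, ∑ b, A' a b = (∑ b, A a b) +
      ((if a = k then A' k l - A k l else 0) + (if a = l then A' k l - A k l else 0)) := by
    intro a
    rw [Finset.sum_congr rfl (fun b _ => hA a b), Finset.sum_add_distrib,
      Finset.sum_add_distrib, s1, s2]
  ext i j
  simp only [lap, Matrix.sub_apply, Matrix.add_apply, Matrix.smul_apply,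
    Matrix.diagonal_apply, vecMulVec_apply, Pi.sub_apply, smul_eq_mul, Pi.single_apply]
  rw [hA i j]
  by_cases hij : i = j
  · subst hij
    rw [hrow i, if_pos rfl, if_pos rfl]
    by_cases hik : i = k <;> by_cases hil : i = l
    · exact absurd (hik.symm.trans hil) hkl
    all_goals (simp [hik, hil, hkl, Ne.symm hkl]; try ring)
  · rw [if_neg hij, if_neg hij]
    by_cases hik : i = k <;> by_cases hjl : j = l <;> by_cases hil : i = l <;>
      by_cases hjk : j = k
    all_goals first
      | (exact absurd (show k = l by grind) hkl)
      | (exact absurd (show i = j by grind) hij)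
      | (simp [hik, hjl, hil, hjk, hij, hkl, Ne.symm hkl, hsymm.apply k l,
          hsymm'.apply k l]; try ring)

lemma effRes_sub_smul (Hm : Matrix (Fin n) (Fin n) ℝ) (β : ℝ) (u : Fin n → ℝ) (i j : Fin n) :
    effRes (Hm - β • vecMulVec u u) i j = effRes Hm i j - β * (u i - u j)^2 := by
  unfold effRes
  rw [Matrix.sub_mulVec, Matrix.smul_mulVec, vecMulVec_mulVec,
    dotProduct_sub]
  have h1 : u ⬝ᵥ ((Pi.single i 1 : Fin n → ℝ) - Pi.single j 1) = u i - u j := by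
    rw [dotProduct_sub, dotProduct_single, dotProduct_single]; ring
  have h2 : ((Pi.single i 1 : Fin n → ℝ) - Pi.single j 1) ⬝ᵥ u = u i - u j := by
    rw [sub_dotProduct, single_dotProduct, single_dotProduct]; ring
  rw [dotProduct_smul, smul_eq_mul, h1, dotProduct_smul, smul_eq_mul, h2]
  ring

end EGR

/-- The total effective graph resistance `R(G) = ∑_{i<j} w_ij` strictly decreases
when a new edge is added between distinct non-adjacent vertices, or when the
weight of an edge is strictly increased. -/
theorem effective_graph_resistance_strict_decrease {n : ℕ} (hn : 2 ≤ n)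
    (A A' : Matrix (Fin n) (Fin n) ℝ)
    (hsymm : A.IsSymm) (hnonneg : ∀ i j, 0 ≤ A i j) (hdiag : ∀ i, A i i = 0)
    (hsymm' : A'.IsSymm) (hdiag' : ∀ i, A' i i = 0)
    (hconn : ∀ i j : Fin n, Relation.ReflTransGen (fun a b => 0 < A a b) i j)
    (k l : Fin n) (hkl : k ≠ l)
    (hinc : A k l < A' k l)
    (hother : ∀ a b, ¬((a = k ∧ b = l) ∨ (a = l ∧ b = k)) → A' a b = A a b)
    (Ldag Ldag' : Matrix (Fin n) (Fin n) ℝ)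
    (hMP : IsMoorePenrose (lap A) Ldag) (hMP' : IsMoorePenrose (lap A') Ldag') :
    ∑ p ∈ Finset.univ.filter (fun p : Fin n × Fin n => p.1 < p.2), effRes Ldag' p.1 p.2
      < ∑ p ∈ Finset.univ.filter (fun p : Fin n × Fin n => p.1 < p.2), effRes Ldag p.1 p.2 := by
  have hn0 : 0 < n := lt_of_lt_of_le two_pos hn
  have hn' : (n:ℝ) ≠ 0 := Nat.cast_ne_zero.mpr hn0.ne'
  set v : Fin n → ℝ := (Pi.single k 1 : Fin n → ℝ) - Pi.single l 1 with hv
  set c : ℝ := A' k l - A k l with hc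
  have hc0 : 0 < c := by rw [hc]; linarith
  have hLsym := EGR.lap_transpose A hsymm
  have hL'sym := EGR.lap_transpose A' hsymm'
  have hHsym := EGR.mp_symm _ _ hLsym hMP
  have hker := EGR.lap_ker A hsymm hnonneg hconn
  have hP : lap A * Ldag = EGR.P n :=
    EGR.LH_eq_P hn0 _ _ hLsym hHsym (EGR.lap_mulVec_one A) hker hMP
  have hdecomp : lap A' = lap A + c • vecMulVec v v :=
    EGR.lap_decomp A A' hsymm hsymm' k l hkl hother
  have hov : EGR.o n ⬝ᵥ v = 0 := by
    rw [hv, dotProduct_sub, dotProduct_single, dotProduct_single]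
    simp [EGR.o]
  have hPv : EGR.P n *ᵥ v = v := EGR.P_mulVec_of_dot_zero v hov
  set u : Fin n → ℝ := Ldag *ᵥ v with hu
  have hLu : lap A *ᵥ u = v := by rw [hu, Matrix.mulVec_mulVec, hP, hPv]
  have hvk : v k = 1 := by
    simp [hv, Pi.single_apply, Ne.symm hkl]
  have hu0 : u ≠ 0 := by
    intro h
    rw [h, Matrix.mulVec_zero] at hLu
    rw [← hLu] at hvk
    simpa using hvk
  set q : ℝ := v ⬝ᵥ u with hq
  have hq0 : 0 ≤ q := by
    rw [hq, ← hLu, dotProduct_comm]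
    exact EGR.lap_quad_nonneg A hsymm hnonneg u
  have hd0 : 0 < 1 + c * q := by nlinarith
  set β : ℝ := c / (1 + c * q) with hβ
  have hβ0 : 0 < β := div_pos hc0 hd0
  have hβd : β * (1 + c * q) = c := div_mul_cancel₀ c hd0.ne'
  have hcoef : c - β * (1 + c * q) = 0 := by rw [hβd]; ring
  have hHP : Ldag * EGR.P n = Ldag := by
    rw [← hP, ← Matrix.mul_assoc, hMP.2.1]
  have hoo : EGR.o n ⬝ᵥ EGR.o n = (n:ℝ) := by
    simp [EGR.dot_o, EGR.o, Finset.card_univ]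
  have hPo : EGR.P n *ᵥ EGR.o n = 0 := by
    rw [EGR.P_mulVec, hoo, inv_mul_cancel₀ hn', one_smul, sub_self]
  have hHo : Ldag *ᵥ EGR.o n = 0 := by
    rw [← hHP, ← Matrix.mulVec_mulVec, hPo, Matrix.mulVec_zero]
  have hou : EGR.o n ⬝ᵥ u = 0 := by
    rw [hu, Matrix.dotProduct_mulVec, ← Matrix.mulVec_transpose, hHsym, hHo,
      zero_dotProduct]
  have hPu : EGR.P n *ᵥ u = u := EGR.P_mulVec_of_dot_zero u hou
  have hPsym : (EGR.P n)ᵀ = EGR.P n := by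
    rw [EGR.P, Matrix.transpose_sub, Matrix.transpose_one, Matrix.transpose_smul,
      EGR.transpose_vecMulVec]
  have hPH : EGR.P n * Ldag = Ldag := by
    have := congrArg Matrix.transpose hHP
    rwa [Matrix.transpose_mul, hPsym, hHsym] at this
  have hvH : v ᵥ* Ldag = u := by
    rw [← Matrix.mulVec_transpose, hHsym]
  have huL : u ᵥ* lap A = v := by
    rw [← Matrix.mulVec_transpose, hLsym, hLu]
  set H2 : Matrix (Fin n) (Fin n) ℝ := Ldag - β • vecMulVec u u with hH2
  have key1 : lap A' * H2 = EGR.P n := by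
    have e1 : lap A * (β • vecMulVec u u) = β • vecMulVec v u := by
      rw [Matrix.mul_smul, EGR.mul_vecMulVec, hLu]
    have e2 : (c • vecMulVec v v) * Ldag = c • vecMulVec v u := by
      rw [Matrix.smul_mul, EGR.vecMulVec_mul, hvH]
    have e3 : (c • vecMulVec v v) * (β • vecMulVec u u) = (c * (β * q)) • vecMulVec v u := by
      rw [Matrix.smul_mul, Matrix.mul_smul, EGR.vecMulVec_mul_vecMulVec, ← hq,
        smul_smul, smul_smul, mul_assoc]
    calc lap A' * H2
        = (lap A + c • vecMulVec v v) * (Ldag - β • vecMulVec u u) := by rw [hH2, hdecomp]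
      _ = (lap A * Ldag - lap A * (β • vecMulVec u u)) +
          ((c • vecMulVec v v) * Ldag - (c • vecMulVec v v) * (β • vecMulVec u u)) := by
            rw [Matrix.add_mul, Matrix.mul_sub, Matrix.mul_sub]
      _ = EGR.P n + (c - β * (1 + c * q)) • vecMulVec v u := by
            rw [hP, e1, e2, e3]; module
      _ = EGR.P n := by rw [hcoef, zero_smul, add_zero]
  have key2 : H2 * lap A' = EGR.P n := by
    have hHL : Ldag * lap A = EGR.P n := by
      rw [← hMP.2.2.2, Matrix.transpose_mul, hLsym, hHsym, hP]
    have e1 : (β • vecMulVec u u) * lap A = β • vecMulVec u v := by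
      rw [Matrix.smul_mul, EGR.vecMulVec_mul, huL]
    have e2 : Ldag * (c • vecMulVec v v) = c • vecMulVec u v := by
      rw [Matrix.mul_smul, EGR.mul_vecMulVec, ← hu]
    have e3 : (β • vecMulVec u u) * (c • vecMulVec v v) = (β * (c * q)) • vecMulVec u v := by
      rw [Matrix.smul_mul, Matrix.mul_smul, EGR.vecMulVec_mul_vecMulVec,
        dotProduct_comm, ← hq, smul_smul, smul_smul, mul_assoc]
    calc H2 * lap A'
        = (Ldag - β • vecMulVec u u) * (lap A + c • vecMulVec v v) := by rw [hH2, hdecomp]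
      _ = (Ldag * lap A + Ldag * (c • vecMulVec v v)) -
          ((β • vecMulVec u u) * lap A + (β • vecMulVec u u) * (c • vecMulVec v v)) := by
            rw [Matrix.sub_mul, Matrix.mul_add, Matrix.mul_add]
      _ = EGR.P n + (c - β * (1 + c * q)) • vecMulVec u v := by
            rw [hHL, e1, e2, e3]; module
      _ = EGR.P n := by rw [hcoef, zero_smul, add_zero]
  have hPL' : EGR.P n * lap A' = lap A' := by
    have hoL' : EGR.o n ᵥ* lap A' = 0 := by
      rw [← Matrix.mulVec_transpose, hL'sym]
      exact EGR.lap_mulVec_one A'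
    have hz : vecMulVec (EGR.o n) (0 : Fin n → ℝ) = 0 := by
      ext i j; simp [Matrix.vecMulVec_apply]
    rw [EGR.P, Matrix.sub_mul, Matrix.one_mul, Matrix.smul_mul, EGR.vecMulVec_mul, hoL',
      hz, smul_zero, sub_zero]
  have hPH2 : EGR.P n * H2 = H2 := by
    rw [hH2, Matrix.mul_sub, hPH, Matrix.mul_smul, EGR.mul_vecMulVec, hPu]
  have hMP2 : IsMoorePenrose (lap A') H2 := by
    refine ⟨?_, ?_, ?_, ?_⟩
    · rw [key1, hPL']
    · rw [key2, hPH2]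
    · rw [key1]; exact hPsym
    · rw [key2]; exact hPsym
  have hEq : Ldag' = H2 := EGR.mp_unique (lap A') Ldag' H2 hMP' hMP2
  have hterm : ∀ p ∈ Finset.univ.filter (fun p : Fin n × Fin n => p.1 < p.2),
      effRes Ldag' p.1 p.2 = effRes Ldag p.1 p.2 - β * (u p.1 - u p.2)^2 := by
    intro p _
    rw [hEq, hH2]
    exact EGR.effRes_sub_smul Ldag β u p.1 p.2
  rw [Finset.sum_congr rfl hterm, Finset.sum_sub_distrib]
  have hpos : 0 < ∑ p ∈ Finset.univ.filter (fun p : Fin n × Fin n => p.1 < p.2),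
      β * (u p.1 - u p.2)^2 := by
    refine Finset.sum_pos' (fun p _ => by positivity) ?_
    obtain ⟨a, ha⟩ : ∃ a, u a ≠ 0 := by
      by_contra h; push_neg at h; exact hu0 (funext h)
    obtain ⟨b, hb⟩ : ∃ b, u b ≠ u a := by
      by_contra h; push_neg at h
      have hsum : ∑ i, u i = 0 := by rw [← EGR.dot_o]; exact hou
      rw [Finset.sum_congr rfl (fun i _ => h i)] at hsum
      simp [Finset.card_univ] at hsum
      rcases hsum with h1 | h1
      · exact absurd h1 hn0.ne'
      · exact ha h1
    have hba : b ≠ a := fun h => hb (h ▸ rfl)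
    rcases lt_or_gt_of_ne hba with hab | hab
    · refine ⟨(b, a), by simp [hab], ?_⟩
      have hne : u b - u a ≠ 0 := sub_ne_zero.mpr hb
      have : 0 < (u b - u a)^2 := by rw [sq]; exact mul_self_pos.mpr hne
      exact mul_pos hβ0 this
    · refine ⟨(a, b), by simp [hab], ?_⟩
      have hne : u a - u b ≠ 0 := sub_ne_zero.mpr fun h => hb h.symm
      have : 0 < (u a - u b)^2 := by rw [sq]; exact mul_self_pos.mpr hne
      exact mul_pos hβ0 this
  exact sub_lt_self _ hpos
end
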